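/- Let ζ : Ω → ℝ be smooth on an open Ω ⊆ ℝ³ (coordinates (x₁,x₂,u)) with ζᵤ nowhere zero, and set ζ* := (F(u) − ζ₁)/ζᵤ. Then ζ satisfies equation (6) on Ω if and only if ζ*₂ + ζζ*ᵤ = F(u) on Ω. If moreover ζ*ᵤ is nowhere zero on Ω, then ζ = (F(u) − ζ*₂)/ζ*ᵤ and ζ* satisfies the mirrored equation ζ*₁₂ + ζ*ζ*₂ᵤ + (ζ*₁ᵤ + ζ*ζ*ᵤᵤ)(F(u) − ζ*₂)/ζ*ᵤ + ζ*ᵤF(u) = ζ*F′(u) on Ω (equation (6) with the indices 1 and 2 interchanged). -/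

import Mathlib

/-- Partial derivative in `x₁` of a function of `(x₁,x₂,u)`. -/
noncomputable def pd1 (f : ℝ × ℝ × ℝ → ℝ) (p : ℝ × ℝ × ℝ) : ℝ :=
  deriv (fun s => f (s, p.2.1, p.2.2)) p.1

/-- Partial derivative in `x₂` of a function of `(x₁,x₂,u)`. -/
noncomputable def pd2 (f : ℝ × ℝ × ℝ → ℝ) (p : ℝ × ℝ × ℝ) : ℝ :=
  deriv (fun s => f (p.1, s, p.2.2)) p.2.1

/-- Partial derivative in `u` of a function of `(x₁,x₂,u)`. -/
noncomputable def pdu (f : ℝ × ℝ × ℝ → ℝ) (p : ℝ × ℝ × ℝ) : ℝ :=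
  deriv (fun s => f (p.1, p.2.1, s)) p.2.2

/-- Equation (6): `ζ₁₂ + ζζ₁ᵤ + (ζ₂ᵤ + ζζᵤᵤ)(F(u) − ζ₁)/ζᵤ + ζᵤF(u) = ζF′(u)`. -/
def Eq6 (F : ℝ → ℝ) (ζ : ℝ × ℝ × ℝ → ℝ) (p : ℝ × ℝ × ℝ) : Prop :=
  pd1 (pd2 ζ) p + ζ p * pdu (pd1 ζ) p
    + (pdu (pd2 ζ) p + ζ p * pdu (pdu ζ) p) * (F p.2.2 - pd1 ζ p) / pdu ζ p
    + pdu ζ p * F p.2.2 = ζ p * deriv F p.2.2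

/-- Equation (6) with the indices 1 and 2 interchanged, written for `ζ*`:
`ζ*₁₂ + ζ*ζ*₂ᵤ + (ζ*₁ᵤ + ζ*ζ*ᵤᵤ)(F(u) − ζ*₂)/ζ*ᵤ + ζ*ᵤF(u) = ζ*F′(u)`. -/
def Eq6swap (F : ℝ → ℝ) (ζs : ℝ × ℝ × ℝ → ℝ) (p : ℝ × ℝ × ℝ) : Prop :=
  pd1 (pd2 ζs) p + ζs p * pdu (pd2 ζs) p
    + (pdu (pd1 ζs) p + ζs p * pdu (pdu ζs) p) * (F p.2.2 - pd2 ζs p) / pdu ζs p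
    + pdu ζs p * F p.2.2 = ζs p * deriv F p.2.2

open Filter Topology

section Helpers

private lemma line1 (p : ℝ×ℝ×ℝ) :
    HasDerivAt (fun s : ℝ => ((s, p.2.1, p.2.2) : ℝ×ℝ×ℝ)) (1,0,0) p.1 :=
  (hasDerivAt_id p.1).prodMk ((hasDerivAt_const _ _).prodMk (hasDerivAt_const _ _))

private lemma line2 (p : ℝ×ℝ×ℝ) :
    HasDerivAt (fun s : ℝ => ((p.1, s, p.2.2) : ℝ×ℝ×ℝ)) (0,1,0) p.2.1 :=
  (hasDerivAt_const _ _).prodMk ((hasDerivAt_id _).prodMk (hasDerivAt_const _ _))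

private lemma lineu (p : ℝ×ℝ×ℝ) :
    HasDerivAt (fun s : ℝ => ((p.1, p.2.1, s) : ℝ×ℝ×ℝ)) (0,0,1) p.2.2 :=
  (hasDerivAt_const _ _).prodMk ((hasDerivAt_const _ _).prodMk (hasDerivAt_id _))

private lemma pd1_eq {f : ℝ×ℝ×ℝ → ℝ} {p} (hf : DifferentiableAt ℝ f p) :
    pd1 f p = fderiv ℝ f p (1,0,0) :=
  (hf.hasFDerivAt.comp_hasDerivAt p.1 (line1 p)).deriv

private lemma pd2_eq {f : ℝ×ℝ×ℝ → ℝ} {p} (hf : DifferentiableAt ℝ f p) :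
    pd2 f p = fderiv ℝ f p (0,1,0) :=
  (hf.hasFDerivAt.comp_hasDerivAt p.2.1 (line2 p)).deriv

private lemma pdu_eq {f : ℝ×ℝ×ℝ → ℝ} {p} (hf : DifferentiableAt ℝ f p) :
    pdu f p = fderiv ℝ f p (0,0,1) :=
  (hf.hasFDerivAt.comp_hasDerivAt p.2.2 (lineu p)).deriv

private lemma pd1_congr {f g : ℝ×ℝ×ℝ → ℝ} {p} (h : f =ᶠ[𝓝 p] g) : pd1 f p = pd1 g p :=
  Filter.EventuallyEq.deriv_eq (h.comp_tendsto (line1 p).continuousAt)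

private lemma pd2_congr {f g : ℝ×ℝ×ℝ → ℝ} {p} (h : f =ᶠ[𝓝 p] g) : pd2 f p = pd2 g p :=
  Filter.EventuallyEq.deriv_eq (h.comp_tendsto (line2 p).continuousAt)

private lemma pdu_congr {f g : ℝ×ℝ×ℝ → ℝ} {p} (h : f =ᶠ[𝓝 p] g) : pdu f p = pdu g p :=
  Filter.EventuallyEq.deriv_eq (h.comp_tendsto (lineu p).continuousAt)

private lemma hD1 {G : ℝ×ℝ×ℝ → (ℝ×ℝ×ℝ →L[ℝ] ℝ)} {W : ℝ×ℝ×ℝ →L[ℝ] (ℝ×ℝ×ℝ →L[ℝ] ℝ)} {p : ℝ×ℝ×ℝ}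
    (hW : HasFDerivAt G W p) (v : ℝ×ℝ×ℝ) :
    HasDerivAt (fun s => G (s, p.2.1, p.2.2) v) (W (1,0,0) v) p.1 := by
  have h1 : HasDerivAt (fun s => G (s, p.2.1, p.2.2)) (W (1,0,0)) p.1 :=
    hW.comp_hasDerivAt p.1 (line1 p)
  simpa using h1.clm_apply (hasDerivAt_const p.1 v)

private lemma hD2 {G : ℝ×ℝ×ℝ → (ℝ×ℝ×ℝ →L[ℝ] ℝ)} {W : ℝ×ℝ×ℝ →L[ℝ] (ℝ×ℝ×ℝ →L[ℝ] ℝ)} {p : ℝ×ℝ×ℝ}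
    (hW : HasFDerivAt G W p) (v : ℝ×ℝ×ℝ) :
    HasDerivAt (fun s => G (p.1, s, p.2.2) v) (W (0,1,0) v) p.2.1 := by
  have h1 : HasDerivAt (fun s => G (p.1, s, p.2.2)) (W (0,1,0)) p.2.1 :=
    hW.comp_hasDerivAt p.2.1 (line2 p)
  simpa using h1.clm_apply (hasDerivAt_const p.2.1 v)

private lemma hDu {G : ℝ×ℝ×ℝ → (ℝ×ℝ×ℝ →L[ℝ] ℝ)} {W : ℝ×ℝ×ℝ →L[ℝ] (ℝ×ℝ×ℝ →L[ℝ] ℝ)} {p : ℝ×ℝ×ℝ}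
    (hW : HasFDerivAt G W p) (v : ℝ×ℝ×ℝ) :
    HasDerivAt (fun s => G (p.1, p.2.1, s) v) (W (0,0,1) v) p.2.2 := by
  have h1 : HasDerivAt (fun s => G (p.1, p.2.1, s)) (W (0,0,1)) p.2.2 :=
    hW.comp_hasDerivAt p.2.2 (lineu p)
  simpa using h1.clm_apply (hasDerivAt_const p.2.2 v)

private lemma core (z a c Fu F' m12 m13 m23 m33 : ℝ) (hc : c ≠ 0) :
    (m12 + z * m13 + (m23 + z * m33) * (Fu - a) / c + c * Fu = z * F') ↔
    (((0 - m12) * c - (Fu - a) * m23) / c ^ 2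
      + z * ((((F' - m13) * c - (Fu - a) * m33)) / c ^ 2) = Fu) := by
  constructor <;> intro h <;> field_simp at h ⊢ <;> linear_combination -h

private lemma key1 {F : ℝ → ℝ} (hF : ContDiff ℝ (⊤ : ℕ∞) F)
    {Ω : Set (ℝ × ℝ × ℝ)} (hΩ : IsOpen Ω)
    {ζ : ℝ × ℝ × ℝ → ℝ} (hζ : ContDiffOn ℝ (⊤ : ℕ∞) ζ Ω)
    {p : ℝ × ℝ × ℝ} (hp : p ∈ Ω) (hc : pdu ζ p ≠ 0) :
    ((pd1 (pd2 ζ) p + ζ p * pdu (pd1 ζ) p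
    + (pdu (pd2 ζ) p + ζ p * pdu (pdu ζ) p) * (F p.2.2 - pd1 ζ p) / pdu ζ p
    + pdu ζ p * F p.2.2 = ζ p * deriv F p.2.2) ↔
      (pd2 (fun q => (F q.2.2 - pd1 ζ q) / pdu ζ q) p
        + ζ p * pdu (fun q => (F q.2.2 - pd1 ζ q) / pdu ζ q) p = F p.2.2)) := by
  have hmem := hΩ.mem_nhds hp
  have hev_diff : ∀ᶠ q in 𝓝 p, DifferentiableAt ℝ ζ q := by
    filter_upwards [hΩ.mem_nhds hp] with q hq
    exact (hζ.contDiffAt (hΩ.mem_nhds hq)).differentiableAt (by simp)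
  have hζp : ContDiffAt ℝ (⊤ : ℕ∞) ζ p := hζ.contDiffAt hmem
  have hZd : DifferentiableAt ℝ (fderiv ℝ ζ) p :=
    (hζp.fderiv_right (m := 1) (WithTop.coe_le_coe.mpr (le_top : (2:ℕ∞) ≤ ⊤))).differentiableAt one_ne_zero
  set W := fderiv ℝ (fderiv ℝ ζ) p with hWdef
  have hW : HasFDerivAt (fderiv ℝ ζ) W p := hZd.hasFDerivAt
  have hsym : ∀ v w, W v w = W w v := hζp.isSymmSndFDerivAt (by simp only [minSmoothness_of_isRCLikeNormedField]; exact WithTop.coe_le_coe.mpr (le_top : (2:ℕ∞) ≤ ⊤))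
  have hevd1 : pd1 ζ =ᶠ[𝓝 p] fun q => fderiv ℝ ζ q (1,0,0) := by
    filter_upwards [hev_diff] with q hq using pd1_eq hq
  have hevd2 : pd2 ζ =ᶠ[𝓝 p] fun q => fderiv ℝ ζ q (0,1,0) := by
    filter_upwards [hev_diff] with q hq using pd2_eq hq
  have hevdu : pdu ζ =ᶠ[𝓝 p] fun q => fderiv ℝ ζ q (0,0,1) := by
    filter_upwards [hev_diff] with q hq using pdu_eq hq
  have hevs : (fun q => (F q.2.2 - pd1 ζ q) / pdu ζ q)
      =ᶠ[𝓝 p] fun q => (F q.2.2 - fderiv ℝ ζ q (1,0,0)) / fderiv ℝ ζ q (0,0,1) := by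
    filter_upwards [hevd1, hevdu] with q h1 h2
    simp only [h1, h2]
  have hdp : DifferentiableAt ℝ ζ p := hζp.differentiableAt (by simp)
  have E5 : pd1 ζ p = fderiv ℝ ζ p (1,0,0) := pd1_eq hdp
  have E6 : pdu ζ p = fderiv ℝ ζ p (0,0,1) := pdu_eq hdp
  have hc' : fderiv ℝ ζ p (0,0,1) ≠ 0 := E6 ▸ hc
  have E1 : pd1 (pd2 ζ) p = W (1,0,0) (0,1,0) := by
    rw [pd1_congr hevd2]; exact (hD1 hW (0,1,0)).deriv
  have E2 : pdu (pd1 ζ) p = W (0,0,1) (1,0,0) := by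
    rw [pdu_congr hevd1]; exact (hDu hW (1,0,0)).deriv
  have E3 : pdu (pd2 ζ) p = W (0,0,1) (0,1,0) := by
    rw [pdu_congr hevd2]; exact (hDu hW (0,1,0)).deriv
  have E4 : pdu (pdu ζ) p = W (0,0,1) (0,0,1) := by
    rw [pdu_congr hevdu]; exact (hDu hW (0,0,1)).deriv
  have S2 : pd2 (fun q => (F q.2.2 - pd1 ζ q) / pdu ζ q) p =
      ((0 - W (0,1,0) (1,0,0)) * fderiv ℝ ζ p (0,0,1)
        - (F p.2.2 - fderiv ℝ ζ p (1,0,0)) * W (0,1,0) (0,0,1))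
        / fderiv ℝ ζ p (0,0,1) ^ 2 := by
    rw [pd2_congr hevs]
    exact (((hasDerivAt_const p.2.1 (F p.2.2)).sub (hD2 hW (1,0,0))).div
      (hD2 hW (0,0,1)) hc').deriv
  have Su : pdu (fun q => (F q.2.2 - pd1 ζ q) / pdu ζ q) p =
      ((deriv F p.2.2 - W (0,0,1) (1,0,0)) * fderiv ℝ ζ p (0,0,1)
        - (F p.2.2 - fderiv ℝ ζ p (1,0,0)) * W (0,0,1) (0,0,1))
        / fderiv ℝ ζ p (0,0,1) ^ 2 := by
    rw [pdu_congr hevs]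
    exact ((((hF.differentiable (by simp) p.2.2).hasDerivAt).sub (hDu hW (1,0,0))).div
      (hDu hW (0,0,1)) hc').deriv
  rw [E1, E2, E3, E4, E5, E6, S2, Su, hsym (0,1,0) (1,0,0), hsym (0,1,0) (0,0,1),
    show (deriv F p.2.2 - W (0,0,1) (1,0,0)) = (deriv F p.2.2 - W (0,0,1) (1,0,0)) from rfl]
  exact core (ζ p) (fderiv ℝ ζ p (1,0,0)) (fderiv ℝ ζ p (0,0,1)) (F p.2.2)
    (deriv F p.2.2) (W (1,0,0) (0,1,0)) (W (0,0,1) (1,0,0)) (W (0,0,1) (0,1,0))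
    (W (0,0,1) (0,0,1)) hc'

private lemma key2 {F : ℝ → ℝ} (hF : ContDiff ℝ (⊤ : ℕ∞) F)
    {Ω : Set (ℝ × ℝ × ℝ)} (hΩ : IsOpen Ω)
    {σ : ℝ × ℝ × ℝ → ℝ} (hσ : ContDiffOn ℝ (⊤ : ℕ∞) σ Ω)
    {p : ℝ × ℝ × ℝ} (hp : p ∈ Ω) (hc : pdu σ p ≠ 0) :
    ((pd1 (pd2 σ) p + σ p * pdu (pd2 σ) p
    + (pdu (pd1 σ) p + σ p * pdu (pdu σ) p) * (F p.2.2 - pd2 σ p) / pdu σ p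
    + pdu σ p * F p.2.2 = σ p * deriv F p.2.2) ↔
      (pd1 (fun q => (F q.2.2 - pd2 σ q) / pdu σ q) p
        + σ p * pdu (fun q => (F q.2.2 - pd2 σ q) / pdu σ q) p = F p.2.2)) := by
  have hmem := hΩ.mem_nhds hp
  have hev_diff : ∀ᶠ q in 𝓝 p, DifferentiableAt ℝ σ q := by
    filter_upwards [hΩ.mem_nhds hp] with q hq
    exact (hσ.contDiffAt (hΩ.mem_nhds hq)).differentiableAt (by simp)
  have hσp : ContDiffAt ℝ (⊤ : ℕ∞) σ p := hσ.contDiffAt hmem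
  have hZd : DifferentiableAt ℝ (fderiv ℝ σ) p :=
    (hσp.fderiv_right (m := 1) (WithTop.coe_le_coe.mpr (le_top : (2:ℕ∞) ≤ ⊤))).differentiableAt one_ne_zero
  set W := fderiv ℝ (fderiv ℝ σ) p with hWdef
  have hW : HasFDerivAt (fderiv ℝ σ) W p := hZd.hasFDerivAt
  have hsym : ∀ v w, W v w = W w v := hσp.isSymmSndFDerivAt (by simp only [minSmoothness_of_isRCLikeNormedField]; exact WithTop.coe_le_coe.mpr (le_top : (2:ℕ∞) ≤ ⊤))
  have hevd1 : pd1 σ =ᶠ[𝓝 p] fun q => fderiv ℝ σ q (1,0,0) := by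
    filter_upwards [hev_diff] with q hq using pd1_eq hq
  have hevd2 : pd2 σ =ᶠ[𝓝 p] fun q => fderiv ℝ σ q (0,1,0) := by
    filter_upwards [hev_diff] with q hq using pd2_eq hq
  have hevdu : pdu σ =ᶠ[𝓝 p] fun q => fderiv ℝ σ q (0,0,1) := by
    filter_upwards [hev_diff] with q hq using pdu_eq hq
  have hevs : (fun q => (F q.2.2 - pd2 σ q) / pdu σ q)
      =ᶠ[𝓝 p] fun q => (F q.2.2 - fderiv ℝ σ q (0,1,0)) / fderiv ℝ σ q (0,0,1) := by
    filter_upwards [hevd2, hevdu] with q h1 h2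
    simp only [h1, h2]
  have hdp : DifferentiableAt ℝ σ p := hσp.differentiableAt (by simp)
  have E5 : pd2 σ p = fderiv ℝ σ p (0,1,0) := pd2_eq hdp
  have E6 : pdu σ p = fderiv ℝ σ p (0,0,1) := pdu_eq hdp
  have hc' : fderiv ℝ σ p (0,0,1) ≠ 0 := E6 ▸ hc
  have E1 : pd1 (pd2 σ) p = W (1,0,0) (0,1,0) := by
    rw [pd1_congr hevd2]; exact (hD1 hW (0,1,0)).deriv
  have E2 : pdu (pd2 σ) p = W (0,0,1) (0,1,0) := by
    rw [pdu_congr hevd2]; exact (hDu hW (0,1,0)).deriv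
  have E3 : pdu (pd1 σ) p = W (0,0,1) (1,0,0) := by
    rw [pdu_congr hevd1]; exact (hDu hW (1,0,0)).deriv
  have E4 : pdu (pdu σ) p = W (0,0,1) (0,0,1) := by
    rw [pdu_congr hevdu]; exact (hDu hW (0,0,1)).deriv
  have S1 : pd1 (fun q => (F q.2.2 - pd2 σ q) / pdu σ q) p =
      ((0 - W (1,0,0) (0,1,0)) * fderiv ℝ σ p (0,0,1)
        - (F p.2.2 - fderiv ℝ σ p (0,1,0)) * W (1,0,0) (0,0,1))
        / fderiv ℝ σ p (0,0,1) ^ 2 := by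
    rw [pd1_congr hevs]
    exact (((hasDerivAt_const p.1 (F p.2.2)).sub (hD1 hW (0,1,0))).div
      (hD1 hW (0,0,1)) hc').deriv
  have Su : pdu (fun q => (F q.2.2 - pd2 σ q) / pdu σ q) p =
      ((deriv F p.2.2 - W (0,0,1) (0,1,0)) * fderiv ℝ σ p (0,0,1)
        - (F p.2.2 - fderiv ℝ σ p (0,1,0)) * W (0,0,1) (0,0,1))
        / fderiv ℝ σ p (0,0,1) ^ 2 := by
    rw [pdu_congr hevs]
    exact ((((hF.differentiable (by simp) p.2.2).hasDerivAt).sub (hDu hW (0,1,0))).div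
      (hDu hW (0,0,1)) hc').deriv
  rw [E1, E2, E3, E4, E5, E6, S1, Su, hsym (1,0,0) (0,0,1)]
  exact core (σ p) (fderiv ℝ σ p (0,1,0)) (fderiv ℝ σ p (0,0,1)) (F p.2.2)
    (deriv F p.2.2) (W (1,0,0) (0,1,0)) (W (0,0,1) (0,1,0)) (W (0,0,1) (1,0,0))
    (W (0,0,1) (0,0,1)) hc'

private lemma zstar_smooth {F : ℝ → ℝ} (hF : ContDiff ℝ (⊤ : ℕ∞) F)
    {Ω : Set (ℝ × ℝ × ℝ)} (hΩ : IsOpen Ω)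
    {ζ : ℝ × ℝ × ℝ → ℝ} (hζ : ContDiffOn ℝ (⊤ : ℕ∞) ζ Ω)
    (hζu : ∀ p ∈ Ω, pdu ζ p ≠ 0) :
    ContDiffOn ℝ (⊤ : ℕ∞) (fun q => (F q.2.2 - pd1 ζ q) / pdu ζ q) Ω := by
  have hdiff : ∀ q ∈ Ω, DifferentiableAt ℝ ζ q := fun q hq =>
    (hζ.contDiffAt (hΩ.mem_nhds hq)).differentiableAt (by simp)
  have hZ : ContDiffOn ℝ (⊤ : ℕ∞) (fderiv ℝ ζ) Ω := hζ.fderiv_of_isOpen hΩ (by simp)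
  have h1 : ContDiffOn ℝ (⊤ : ℕ∞) (fun q => fderiv ℝ ζ q (1,0,0)) Ω :=
    (ContinuousLinearMap.apply ℝ ℝ ((1:ℝ),(0:ℝ),(0:ℝ))).contDiff.comp_contDiffOn hZ
  have hu : ContDiffOn ℝ (⊤ : ℕ∞) (fun q => fderiv ℝ ζ q (0,0,1)) Ω :=
    (ContinuousLinearMap.apply ℝ ℝ ((0:ℝ),(0:ℝ),(1:ℝ))).contDiff.comp_contDiffOn hZ
  have hFc : ContDiff ℝ (⊤ : ℕ∞) (fun q : ℝ×ℝ×ℝ => F q.2.2) :=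
    hF.comp (contDiff_snd.comp contDiff_snd)
  have hg : ContDiffOn ℝ (⊤ : ℕ∞)
      (fun q => (F q.2.2 - fderiv ℝ ζ q (1,0,0)) / fderiv ℝ ζ q (0,0,1)) Ω := by
    apply ContDiffOn.div ((hFc.contDiffOn).sub h1) hu
    intro q hq
    rw [← pdu_eq (hdiff q hq)]
    exact hζu q hq
  apply hg.congr
  intro q hq
  rw [pd1_eq (hdiff q hq), pdu_eq (hdiff q hq)]


/-- Proposition 3: with `ζ* := (F(u) − ζ₁)/ζᵤ`, the determining equation (6) for `ζ`
is equivalent to the compatibility condition `ζ*₂ + ζζ*ᵤ = F(u)`; moreover if `ζ*ᵤ` is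
nowhere zero, then `ζ = (F(u) − ζ*₂)/ζ*ᵤ` and `ζ*` satisfies the mirrored equation (6). -/
theorem adjoint_singular_reduction_operators
    (F : ℝ → ℝ) (hF : ContDiff ℝ (⊤ : ℕ∞) F)
    (Ω : Set (ℝ × ℝ × ℝ)) (hΩ : IsOpen Ω)
    (ζ : ℝ × ℝ × ℝ → ℝ) (hζ : ContDiffOn ℝ (⊤ : ℕ∞) ζ Ω)
    (hζu : ∀ p ∈ Ω, pdu ζ p ≠ 0) :
    ((∀ p ∈ Ω, Eq6 F ζ p) ↔
      (∀ p ∈ Ω,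
        pd2 (fun q => (F q.2.2 - pd1 ζ q) / pdu ζ q) p
          + ζ p * pdu (fun q => (F q.2.2 - pd1 ζ q) / pdu ζ q) p = F p.2.2)) ∧
    ((∀ p ∈ Ω, Eq6 F ζ p) →
      (∀ p ∈ Ω, pdu (fun q => (F q.2.2 - pd1 ζ q) / pdu ζ q) p ≠ 0) →
      (∀ p ∈ Ω,
        ζ p = (F p.2.2 - pd2 (fun q => (F q.2.2 - pd1 ζ q) / pdu ζ q) p)
              / pdu (fun q => (F q.2.2 - pd1 ζ q) / pdu ζ q) p ∧
        Eq6swap F (fun q => (F q.2.2 - pd1 ζ q) / pdu ζ q) p)) := by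
  constructor
  · constructor
    · intro h p hp
      exact (key1 hF hΩ hζ hp (hζu p hp)).mp (h p hp)
    · intro h p hp
      exact (key1 hF hΩ hζ hp (hζu p hp)).mpr (h p hp)
  · intro hEq6 hsu p hp
    have hσ := zstar_smooth hF hΩ hζ hζu
    have compat : ∀ q ∈ Ω, pd2 (fun q => (F q.2.2 - pd1 ζ q) / pdu ζ q) q
        + ζ q * pdu (fun q => (F q.2.2 - pd1 ζ q) / pdu ζ q) q = F q.2.2 := fun q hq =>
      (key1 hF hΩ hζ hq (hζu q hq)).mp (hEq6 q hq)
    constructor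
    · rw [eq_div_iff (hsu p hp)]
      have := compat p hp
      linarith
    · apply (key2 hF hΩ hσ hp (hsu p hp)).mpr
      have hev : (fun q => (F q.2.2 - pd2 (fun q => (F q.2.2 - pd1 ζ q) / pdu ζ q) q)
          / pdu (fun q => (F q.2.2 - pd1 ζ q) / pdu ζ q) q) =ᶠ[𝓝 p] ζ := by
        filter_upwards [hΩ.mem_nhds hp] with q hq
        rw [div_eq_iff (hsu q hq)]
        have := compat q hq
        linarith
      rw [pd1_congr hev, pdu_congr hev]
      show pd1 ζ p + (F p.2.2 - pd1 ζ p) / pdu ζ p * pdu ζ p = F p.2.2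
      rw [div_mul_cancel₀ _ (hζu p hp)]
      ring
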